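/- Let μ, weights w_{1,a}, w_{2,b}, compositions n₁, n₂, weighted strings ξ₁, ξ₂ and the moment matrix g be as in the standard setup, with x ↦ x^m w_{1,a}(x) w_{2,b}(x) μ-integrable for all m, a, b. Let S be a semi-infinite lower unitriangular real matrix (S_{l,i} = 0 for i > l, S_{l,l} = 1) such that Sg is upper triangular, i.e. Σ_{i=0}^{l} S_{l,i} g_{i,j} = 0 for all j < l. Define the linear form Q^{(l)}(x) = Σ_{i=0}^{l} S_{l,i} ξ₁^{(i)}(x). Then for every b ∈ {1,…,p₂} and every integer k with 0 ≤ k ≤ ν_{2,b}(l−1) − 1, where ν_{2,b}(l−1) := #{j : 0 ≤ j ≤ l−1, a₂(j) = b}, one has ∫ Q^{(l)}(x) w_{2,b}(x) x^k dμ(x) = 0. -/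

import Mathlib

/-!
Among the indices `j` with `a₂(j) = b`, listed in increasing order, the `k`-th one `j₀` is the
unique index with `ξ₂^{(j₀)} = w_{2,b} xᵏ`. If `k < ν_{2,b}(l−1)`, then `j₀ < l`, so the integral
is the entry `(Sg)_{l,j₀}` below the diagonal of the upper triangular matrix `Sg`.
-/

open MeasureTheory Finset

namespace MixedMultipleOrthogonality

lemma integral_sum_const_mul_mul {α : Type*} [MeasurableSpace α] {μ : Measure α} {ι : Type*}
    (s : Finset ι) (c : ι → ℝ) (f : ι → α → ℝ) (h : α → ℝ)
    (hfh : ∀ i ∈ s, Integrable (fun x => f i x * h x) μ) :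
    ∫ x, (∑ i ∈ s, c i * f i x) * h x ∂μ = ∑ i ∈ s, c i * ∫ x, f i x * h x ∂μ := by
  simp_rw [sum_mul, mul_assoc]
  rw [integral_finsetSum s fun i hi => (hfh i hi).const_mul (c i)]
  simp_rw [integral_const_mul]

section BlockDecomposition

variable {p : ℕ} (n : Fin p → ℕ)

/-- `n_1 + ⋯ + n_{c-1}`, the position of the first entry of type `c` inside a block of length
`|n|`. -/
def blockOffset (c : Fin p) : ℕ := ∑ i ∈ univ.filter (· < c), n i

def IsBlockDecomposition (kk : ℕ → ℕ) (aa : ℕ → Fin p) (rr : ℕ → ℕ) : Prop :=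
  ∀ l, rr l < n (aa l) ∧ l = kk l * (∑ c, n c) + blockOffset n (aa l) + rr l

/-- The index of type `c` whose weighted monomial carries the power `x ^ m`. -/
def blockIndex (c : Fin p) (m : ℕ) : ℕ :=
  m / n c * (∑ i, n i) + blockOffset n c + m % n c

lemma blockOffset_add_eq_sum_insert (c : Fin p) :
    blockOffset n c + n c = ∑ i ∈ insert c (univ.filter (· < c)), n i := by
  rw [sum_insert (by simp), add_comm, blockOffset]

lemma blockOffset_add_le_sum (c : Fin p) : blockOffset n c + n c ≤ ∑ i, n i := by
  rw [blockOffset_add_eq_sum_insert]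
  exact sum_le_sum_of_subset (subset_univ _)

lemma blockOffset_add_le_of_lt {c c' : Fin p} (h : c < c') :
    blockOffset n c + n c ≤ blockOffset n c' := by
  rw [blockOffset_add_eq_sum_insert, blockOffset]
  refine sum_le_sum_of_subset fun i hi => ?_
  simp only [mem_insert, mem_filter, mem_univ, true_and] at hi ⊢
  rcases hi with rfl | hi
  exacts [h, hi.trans h]

lemma eq_of_block_position_eq {q q' r r' : ℕ} {c c' : Fin p}
    (hr : r < n c) (hr' : r' < n c')
    (h : q * (∑ i, n i) + blockOffset n c + r = q' * (∑ i, n i) + blockOffset n c' + r') :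
    c = c' ∧ q = q' ∧ r = r' := by
  set N := ∑ i, n i
  have hlt : blockOffset n c + r < N := by have := blockOffset_add_le_sum n c; omega
  have hlt' : blockOffset n c' + r' < N := by have := blockOffset_add_le_sum n c'; omega
  have hN : 0 < N := by omega
  have hq : q = q' := by
    have quot : ∀ q m, m < N → (q * N + m) / N = q := fun q m hm => by
      rw [mul_comm, Nat.mul_add_div hN, Nat.div_eq_of_lt hm, add_zero]
    rw [← quot q _ hlt, ← quot q' _ hlt', ← add_assoc, ← add_assoc, h]
  subst hq
  have hc : c = c' := by
    rcases lt_trichotomy c c' with hcc | hcc | hcc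
    · have := blockOffset_add_le_of_lt n hcc; omega
    · exact hcc
    · have := blockOffset_add_le_of_lt n hcc; omega
  subst hc
  exact ⟨rfl, rfl, by omega⟩

lemma blockIndex_strictMono {c : Fin p} (hc : 0 < n c) : StrictMono (blockIndex n c) := by
  intro m m' hm
  rcases (Nat.div_le_div_right (c := n c) hm.le).eq_or_lt with hdiv | hdiv
  · have : m % n c < m' % n c := by
      have := Nat.div_add_mod m (n c); have := Nat.div_add_mod m' (n c)
      rw [hdiv] at *; omega
    unfold blockIndex; rw [hdiv]; omega
  · calc blockIndex n c m < m / n c * (∑ i, n i) + blockOffset n c + n c := by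
          unfold blockIndex; have := Nat.mod_lt m hc; omega
      _ ≤ (m / n c + 1) * (∑ i, n i) := by
          have := blockOffset_add_le_sum n c; rw [add_mul, one_mul]; omega
      _ ≤ m' / n c * (∑ i, n i) := Nat.mul_le_mul_right _ hdiv
      _ ≤ blockIndex n c m' := by unfold blockIndex; omega

namespace IsBlockDecomposition

variable {n} {kk : ℕ → ℕ} {aa : ℕ → Fin p} {rr : ℕ → ℕ}

lemma type_blockIndex (hdec : IsBlockDecomposition n kk aa rr) {c : Fin p} (hc : 0 < n c)
    (m : ℕ) :
    aa (blockIndex n c m) = c ∧ kk (blockIndex n c m) * n c + rr (blockIndex n c m) = m := by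
  obtain ⟨hrr, hpos⟩ := hdec (blockIndex n c m)
  obtain ⟨hcc, hkk, hr⟩ := eq_of_block_position_eq n hrr (Nat.mod_lt m hc) hpos.symm
  rw [hcc, hkk, hr]
  exact ⟨rfl, Nat.div_add_mod' m (n c)⟩

lemma blockIndex_exponent (hdec : IsBlockDecomposition n kk aa rr) {j : ℕ} :
    blockIndex n (aa j) (kk j * n (aa j) + rr j) = j := by
  obtain ⟨hrr, hpos⟩ := hdec j
  have hn : 0 < n (aa j) := by omega
  have hdiv : (kk j * n (aa j) + rr j) / n (aa j) = kk j := by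
    rw [mul_comm, Nat.mul_add_div hn, Nat.div_eq_of_lt hrr, add_zero]
  have hmod : (kk j * n (aa j) + rr j) % n (aa j) = rr j := by
    rw [mul_comm, Nat.mul_add_mod, Nat.mod_eq_of_lt hrr]
  rw [blockIndex, hdiv, hmod, ← hpos]

/-- If `blockIndex c k ≥ l`, the exponent map sends the indices of type `c` below `l` into
`range k`, by monotonicity of `blockIndex c`. -/
lemma blockIndex_lt_of_lt_card (hdec : IsBlockDecomposition n kk aa rr) {c : Fin p}
    (hc : 0 < n c) {l k : ℕ} (hk : k < ((range l).filter (aa · = c)).card) :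
    blockIndex n c k < l := by
  by_contra! hl
  have hsub : (range l).filter (aa · = c) ⊆ (range k).image (blockIndex n c) := by
    intro j hj
    obtain ⟨hjl, rfl⟩ : j < l ∧ aa j = c := by simpa using hj
    refine mem_image.mpr ⟨kk j * n (aa j) + rr j, mem_range.mpr ?_, hdec.blockIndex_exponent⟩
    rw [← (blockIndex_strictMono n hc).lt_iff_lt, hdec.blockIndex_exponent]
    omega
  have := (card_le_card hsub).trans card_image_le
  rw [card_range] at this
  omega

end IsBlockDecomposition

end BlockDecomposition

end MixedMultipleOrthogonality

open MixedMultipleOrthogonality in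
theorem stmt_9_general
    (μ : Measure ℝ)
    (p₁ p₂ : ℕ)
    (n₁ : Fin p₁ → ℕ)
    (n₂ : Fin p₂ → ℕ) (hn₂ : ∀ b, 1 ≤ n₂ b)
    (w₁ : Fin p₁ → ℝ → ℝ) (w₂ : Fin p₂ → ℝ → ℝ)
    (hint : ∀ (m : ℕ) (a : Fin p₁) (b : Fin p₂),
      Integrable (fun x => x ^ m * w₁ a x * w₂ b x) μ)
    (kk₁ : ℕ → ℕ) (aa₁ : ℕ → Fin p₁) (rr₁ : ℕ → ℕ)
    (kk₂ : ℕ → ℕ) (aa₂ : ℕ → Fin p₂) (rr₂ : ℕ → ℕ)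
    (hdec₂ : ∀ l, rr₂ l < n₂ (aa₂ l) ∧
      l = kk₂ l * (∑ b, n₂ b) +
          (∑ i ∈ Finset.univ.filter (fun i => i < aa₂ l), n₂ i) + rr₂ l)
    (ξ₁ : ℕ → ℝ → ℝ)
    (hξ₁ : ∀ i x, ξ₁ i x = w₁ (aa₁ i) x * x ^ (kk₁ i * n₁ (aa₁ i) + rr₁ i))
    (ξ₂ : ℕ → ℝ → ℝ)
    (hξ₂ : ∀ j x, ξ₂ j x = w₂ (aa₂ j) x * x ^ (kk₂ j * n₂ (aa₂ j) + rr₂ j))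
    (g : ℕ → ℕ → ℝ)
    (hg : ∀ i j, g i j = ∫ x, ξ₁ i x * ξ₂ j x ∂μ)
    (S : ℕ → ℕ → ℝ)
    (hSg_upper : ∀ l j, j < l → ∑ i ∈ Finset.range (l + 1), S l i * g i j = 0)
    (Q : ℕ → ℝ → ℝ)
    (hQ : ∀ l x, Q l x = ∑ i ∈ Finset.range (l + 1), S l i * ξ₁ i x)
    (l : ℕ) (b : Fin p₂) (k : ℕ)
    (hk : k < ((Finset.range l).filter (fun j => aa₂ j = b)).card) :
    ∫ x, Q l x * w₂ b x * x ^ k ∂μ = 0 := by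
  have hdec : IsBlockDecomposition n₂ kk₂ aa₂ rr₂ := hdec₂
  set j := blockIndex n₂ b k
  obtain ⟨hj_type, hj_exp⟩ := hdec.type_blockIndex (hn₂ b) k
  have hξ₂j : ∀ x, ξ₂ j x = w₂ b x * x ^ k := fun x => by rw [hξ₂, hj_type, hj_exp]
  have hint_j : ∀ i, Integrable (fun x => ξ₁ i x * ξ₂ j x) μ := fun i =>
    (hint (kk₁ i * n₁ (aa₁ i) + rr₁ i + k) (aa₁ i) b).congr <| ae_of_all _ fun x => by
      simp only [hξ₁, hξ₂j, pow_add]; ring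
  calc ∫ x, Q l x * w₂ b x * x ^ k ∂μ
      = ∫ x, (∑ i ∈ range (l + 1), S l i * ξ₁ i x) * ξ₂ j x ∂μ := by
        simp only [hQ, hξ₂j, mul_assoc]
    _ = ∑ i ∈ range (l + 1), S l i * g i j := by
        rw [integral_sum_const_mul_mul _ _ _ _ fun i _ => hint_j i]
        simp only [hg]
    _ = 0 := hSg_upper l j (hdec.blockIndex_lt_of_lt_card (hn₂ b) hk)

/-- Orthogonality relations for the linear forms `Q⁽ˡ⁾ = Σ_{i≤l} S_{l,i} ξ₁⁽ⁱ⁾`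
coming from a lower unitriangular `S` making `Sg` upper triangular:
`∫ Q⁽ˡ⁾(x) w_{2,b}(x) xᵏ dμ = 0` for `0 ≤ k ≤ ν_{2,b}(l−1) − 1`. -/
theorem stmt_9
    (μ : Measure ℝ) [IsFiniteMeasure μ]
    (p₁ p₂ : ℕ) (hp₁ : 1 ≤ p₁) (hp₂ : 1 ≤ p₂)
    (n₁ : Fin p₁ → ℕ) (hn₁ : ∀ a, 1 ≤ n₁ a)
    (n₂ : Fin p₂ → ℕ) (hn₂ : ∀ b, 1 ≤ n₂ b)
    (w₁ : Fin p₁ → ℝ → ℝ) (w₂ : Fin p₂ → ℝ → ℝ)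
    (hw₁ : ∀ a, Measurable (w₁ a)) (hw₂ : ∀ b, Measurable (w₂ b))
    (hint : ∀ (m : ℕ) (a : Fin p₁) (b : Fin p₂),
      Integrable (fun x => x ^ m * w₁ a x * w₂ b x) μ)
    (kk₁ : ℕ → ℕ) (aa₁ : ℕ → Fin p₁) (rr₁ : ℕ → ℕ)
    (hdec₁ : ∀ l, rr₁ l < n₁ (aa₁ l) ∧
      l = kk₁ l * (∑ b, n₁ b) +
          (∑ i ∈ Finset.univ.filter (fun i => i < aa₁ l), n₁ i) + rr₁ l)
    (kk₂ : ℕ → ℕ) (aa₂ : ℕ → Fin p₂) (rr₂ : ℕ → ℕ)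
    (hdec₂ : ∀ l, rr₂ l < n₂ (aa₂ l) ∧
      l = kk₂ l * (∑ b, n₂ b) +
          (∑ i ∈ Finset.univ.filter (fun i => i < aa₂ l), n₂ i) + rr₂ l)
    (ξ₁ : ℕ → ℝ → ℝ)
    (hξ₁ : ∀ i x, ξ₁ i x = w₁ (aa₁ i) x * x ^ (kk₁ i * n₁ (aa₁ i) + rr₁ i))
    (ξ₂ : ℕ → ℝ → ℝ)
    (hξ₂ : ∀ j x, ξ₂ j x = w₂ (aa₂ j) x * x ^ (kk₂ j * n₂ (aa₂ j) + rr₂ j))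
    (g : ℕ → ℕ → ℝ)
    (hg : ∀ i j, g i j = ∫ x, ξ₁ i x * ξ₂ j x ∂μ)
    (S : ℕ → ℕ → ℝ)
    (hS_tri : ∀ i j, i < j → S i j = 0) (hS_diag : ∀ i, S i i = 1)
    (hSg_upper : ∀ l j, j < l → ∑ i ∈ Finset.range (l + 1), S l i * g i j = 0)
    (Q : ℕ → ℝ → ℝ)
    (hQ : ∀ l x, Q l x = ∑ i ∈ Finset.range (l + 1), S l i * ξ₁ i x)
    (l : ℕ) (b : Fin p₂) (k : ℕ)
    (hk : k < ((Finset.range l).filter (fun j => aa₂ j = b)).card) :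
    ∫ x, Q l x * w₂ b x * x ^ k ∂μ = 0 :=
  stmt_9_general μ p₁ p₂ n₁ n₂ hn₂ w₁ w₂ hint kk₁ aa₁ rr₁ kk₂ aa₂ rr₂ hdec₂ ξ₁ hξ₁ ξ₂ hξ₂ g hg S
    hSg_upper Q hQ l b k hk
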